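/- Let A be a cosimplicial abelian group. For fixed k and n with k ≤ n-1, the map s : A^n → M_k^{n-1}A given by a ↦ (s^0 a, ..., s^k a) is surjective, where M_k^{n-1}A is the set of tuples (a_0,...,a_k) in A^{n-1} with s^i a_j = s^{j-1} a_i for i < j. -/

import Mathlib

/-- A cosimplicial abelian group, given by abelian groups `A n` for `n : ℕ` together with
coface homomorphisms `d n i : A n →+ A (n+1)` (the map `d^i`, meaningful for `i ≤ n+1`) and
codegeneracy homomorphisms `s n i : A (n+1) →+ A n` (the map `s^i`, meaningful for `i ≤ n`),
subject to the standard cosimplicial identities. -/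
structure CosAb (A : ℕ → Type) [∀ n, AddCommGroup (A n)] : Type where
  d : ∀ n : ℕ, ℕ → (A n →+ A (n + 1))
  s : ∀ n : ℕ, ℕ → (A (n + 1) →+ A n)
  /-- `d^{j+1} ∘ d^i = d^i ∘ d^j` for `i ≤ j` (i.e. `d^j d^i = d^i d^{j-1}` for `i < j`). -/
  dd : ∀ n i j : ℕ, i ≤ j → j ≤ n + 1 →
    (d (n + 1) (j + 1)).comp (d n i) = (d (n + 1) i).comp (d n j)
  /-- `s^i d^i = id`. -/
  sd_self : ∀ n i : ℕ, i ≤ n → (s n i).comp (d n i) = AddMonoidHom.id (A n)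
  /-- `s^i d^{i+1} = id`. -/
  sd_succ : ∀ n i : ℕ, i ≤ n → (s n i).comp (d n (i + 1)) = AddMonoidHom.id (A n)
  /-- `s^{j+1} d^i = d^i s^j` for `i ≤ j` (i.e. `s^j d^i = d^i s^{j-1}` for `i < j`). -/
  sd_lt : ∀ n i j : ℕ, i ≤ j → j ≤ n →
    (s (n + 1) (j + 1)).comp (d (n + 1) i) = (d n i).comp (s n j)
  /-- `s^j d^i = d^{i-1} s^j` for `i > j + 1`. -/
  sd_gt : ∀ n i j : ℕ, j + 1 < i → i ≤ n + 2 →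
    (s (n + 1) j).comp (d (n + 1) i) = (d n (i - 1)).comp (s n j)
  /-- `s^j s^i = s^i s^{j+1}` for `i ≤ j`. -/
  ss : ∀ n i j : ℕ, i ≤ j → j ≤ n →
    (s n j).comp (s (n + 1) i) = (s n i).comp (s (n + 1) (j + 1))

/-- The partial matching condition on a tuple `(a_0, …, a_k)` of elements of `A^n`
(the tuples making up `M_k^{n-1}A` at top level `n+1`): `s^i a_j = s^{j-1} a_i` for `i < j`. -/
def MatchKTuple {A : ℕ → Type} [∀ n, AddCommGroup (A n)] (C : CosAb A) (n k : ℕ)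
    (v : Fin (k + 1) → A n) : Prop :=
  ∀ (m : ℕ) (hm : n = m + 1) (i j : Fin (k + 1)), (i : ℕ) < (j : ℕ) →
    C.s m i (cast (congrArg A hm) (v j)) = C.s m ((j : ℕ) - 1) (cast (congrArg A hm) (v i))

/-!
Induct on `k`. For `k = 0` take `a = d^0 a_0`. Given `a` with `s^i a = a_i` for `i ≤ k`, the
error `w = s^{k+1} a - a_{k+1}` is killed by `s^0, …, s^k`: the matching condition and
`s^i s^{k+1} = s^k s^i` give `s^i a_{k+1} = s^k a_i = s^i s^{k+1} a`. Hence `a - d^{k+2} w` keeps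
the faces `s^i a` for `i ≤ k`, since `s^i d^{k+2} = d^{k+1} s^i`, and has `s^{k+1}`-face
`a_{k+1}`, since `s^{k+1} d^{k+2} = id`.
-/

namespace CosAb

variable {A : ℕ → Type} [∀ n, AddCommGroup (A n)] (C : CosAb A)

theorem s_d_self_apply {n i : ℕ} (hi : i ≤ n) (x : A n) : C.s n i (C.d n i x) = x :=
  DFunLike.congr_fun (C.sd_self n i hi) x

theorem s_d_succ_apply {n i : ℕ} (hi : i ≤ n) (x : A n) : C.s n i (C.d n (i + 1) x) = x :=
  DFunLike.congr_fun (C.sd_succ n i hi) x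

theorem s_d_of_succ_lt_apply {n i j : ℕ} (hij : j + 1 < i) (hi : i ≤ n + 2) (x : A (n + 1)) :
    C.s (n + 1) j (C.d (n + 1) i x) = C.d n (i - 1) (C.s n j x) :=
  DFunLike.congr_fun (C.sd_gt n i j hij hi) x

theorem s_s_apply {n i j : ℕ} (hij : i ≤ j) (hj : j ≤ n) (x : A (n + 2)) :
    C.s n j (C.s (n + 1) i x) = C.s n i (C.s (n + 1) (j + 1) x) :=
  DFunLike.congr_fun (C.ss n i j hij hj) x

theorem exists_s_eq_of_s_s_eq {m k : ℕ} (hk : k ≤ m) (a : A (m + 2)) (x : A (m + 1))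
    (hx : ∀ i ≤ k, C.s m i x = C.s m i (C.s (m + 1) (k + 1) a)) :
    ∃ a' : A (m + 2), (∀ i ≤ k, C.s (m + 1) i a' = C.s (m + 1) i a) ∧
      C.s (m + 1) (k + 1) a' = x := by
  set w := C.s (m + 1) (k + 1) a - x
  refine ⟨a - C.d (m + 1) (k + 2) w, fun i hi => ?_, ?_⟩
  · have hw : C.s m i w = 0 := by simp [w, hx i hi]
    rw [map_sub, C.s_d_of_succ_lt_apply (by omega) (by omega), hw, map_zero, sub_zero]
  · rw [map_sub, C.s_d_succ_apply (by omega)]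
    exact sub_sub_cancel _ _

theorem exists_forall_s_eq {m : ℕ} (k : ℕ) (hk : k ≤ m + 1) (v : ℕ → A (m + 1))
    (hv : ∀ i j, i < j → j ≤ k → C.s m i (v j) = C.s m (j - 1) (v i)) :
    ∃ a : A (m + 2), ∀ i ≤ k, C.s (m + 1) i a = v i := by
  induction k with
  | zero =>
    refine ⟨C.d (m + 1) 0 (v 0), fun i hi => ?_⟩
    obtain rfl : i = 0 := by omega
    exact C.s_d_self_apply (Nat.zero_le _) _
  | succ k ih =>
    obtain ⟨a, ha⟩ := ih (by omega) fun i j hij hj => hv i j hij (by omega)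
    have compatible : ∀ i ≤ k, C.s m i (v (k + 1)) = C.s m i (C.s (m + 1) (k + 1) a) :=
      fun i hi => by
        rw [← C.s_s_apply hi (by omega), ha i hi, hv i (k + 1) (by omega) le_rfl,
          Nat.add_sub_cancel]
    obtain ⟨a', ha', hlast⟩ := C.exists_s_eq_of_s_s_eq (by omega) a (v (k + 1)) compatible
    refine ⟨a', fun i hi => ?_⟩
    rcases Nat.lt_or_eq_of_le hi with hi | rfl
    · rw [ha' i (Nat.le_of_lt_succ hi), ha i (Nat.le_of_lt_succ hi)]
    · exact hlast

end CosAb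

/-- For a cosimplicial abelian group `A` and `k ≤ n - 1` (here stated with top
level `n+1`, so the condition is `k ≤ n`), the map `s : A^{n+1} → M_k^n A`,
`a ↦ (s^0 a, …, s^k a)`, is surjective onto the set of partial matching tuples. -/
theorem partial_matching_map_surjective
    (A : ℕ → Type) [∀ n, AddCommGroup (A n)] (C : CosAb A) (n k : ℕ) (hk : k ≤ n)
    (v : Fin (k + 1) → A n) (hv : MatchKTuple C n k v) :
    ∃ a : A (n + 1), ∀ i : Fin (k + 1), C.s n i a = v i := by
  cases n with
  | zero =>
    obtain rfl : k = 0 := by omega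
    exact ⟨C.d 0 0 (v 0), fun i => by rw [Fin.fin_one_eq_zero i]; exact C.s_d_self_apply le_rfl _⟩
  | succ m =>
    let v' : ℕ → A (m + 1) := fun i => if h : i ≤ k then v ⟨i, Nat.lt_succ_of_le h⟩ else 0
    have hv' : ∀ i j, i < j → j ≤ k → C.s m i (v' j) = C.s m (j - 1) (v' i) := fun i j hij hj => by
      simpa [v', hj, show i ≤ k by omega] using hv m rfl ⟨i, by omega⟩ ⟨j, by omega⟩ hij
    obtain ⟨a, ha⟩ := C.exists_forall_s_eq k hk v' hv'
    have hi : ∀ i : Fin (k + 1), (i : ℕ) ≤ k := fun i => Nat.lt_succ_iff.mp i.isLt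
    exact ⟨a, fun i => by simpa [v', hi i] using ha i (hi i)⟩
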